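/- The transformation (top) in Simple is correct: for all Simple expressions e1, e2, if e1 →top e2 then e1 ∼c e2 (e1 and e2 are contextually equivalent). -/

import Mathlib

/-- Expressions of the calculus `Simple`: `e ::= ⊥ | ⊤ | ¬e | e ∧ e`. -/
inductive SExp : Type where
  | bot : SExp
  | top : SExp
  | neg : SExp → SExp
  | and : SExp → SExp → SExp

/-- Evaluation contexts: `A ::= [·] | ¬A | A ∧ e`. -/
inductive ECtx : Type where
  | hole : ECtx
  | neg : ECtx → ECtx
  | and : ECtx → SExp → ECtx

/-- Hole filling for evaluation contexts. -/
def ECtx.fill : ECtx → SExp → SExp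
  | .hole, e => e
  | .neg A, e => .neg (A.fill e)
  | .and A t, e => .and (A.fill e) t

/-- General contexts: `C ::= [·] | ¬C | C ∧ e | e ∧ C`. -/
inductive GCtx : Type where
  | hole : GCtx
  | neg : GCtx → GCtx
  | andL : GCtx → SExp → GCtx
  | andR : SExp → GCtx → GCtx

/-- Hole filling for general contexts. -/
def GCtx.fill : GCtx → SExp → SExp
  | .hole, e => e
  | .neg C, e => .neg (C.fill e)
  | .andL C t, e => .and (C.fill e) t
  | .andR t C, e => .and t (C.fill e)

/-- Labels of the standard-reduction rules. -/
inductive SRLab : Type where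
  | bot | top | neg1 | neg2

/-- The labelled standard reduction rules of `Simple`. -/
inductive SRL : SRLab → SExp → SExp → Prop where
  | bot (A : ECtx) (e : SExp) : SRL .bot (A.fill (.and .bot e)) (A.fill .bot)
  | top (A : ECtx) (e : SExp) : SRL .top (A.fill (.and .top e)) (A.fill e)
  | neg1 (A : ECtx) : SRL .neg1 (A.fill (.neg .top)) (A.fill .bot)
  | neg2 (A : ECtx) : SRL .neg2 (A.fill (.neg .bot)) (A.fill .top)

/-- The standard reduction `→sr` (union of the four rules). -/
def SR (e e' : SExp) : Prop := ∃ a, SRL a e e'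

/-- The transformation `(top)`: `C[⊤ ∧ e] →top C[e]` for all general contexts `C`. -/
inductive TopT : SExp → SExp → Prop where
  | mk (C : GCtx) (e : SExp) : TopT (C.fill (.and .top e)) (C.fill e)

/-- Convergence: `e ↓` iff `e →sr* ⊤`. -/
def SConv (e : SExp) : Prop := Relation.ReflTransGen SR e .top

/-!
Interpret `Simple` in the Booleans. Standard reduction preserves the Boolean value and drives
every expression to the constant `⊤` or `⊥` naming its value, so `e↓` holds iff `e` evaluates
to `true`. Evaluation is compositional and `⊤ ∧ e` has the value of `e`, so both sides of a
`(top)` step have the same value in every general context.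
-/

open Relation

def SExp.eval : SExp → Bool
  | .bot => false
  | .top => true
  | .neg e => !e.eval
  | .and e₁ e₂ => e₁.eval && e₂.eval

def ECtx.comp : ECtx → ECtx → ECtx
  | .hole, B => B
  | .neg A, B => .neg (A.comp B)
  | .and A t, B => .and (A.comp B) t

theorem ECtx.fill_comp (A B : ECtx) (e : SExp) : (A.comp B).fill e = A.fill (B.fill e) := by
  induction A with
  | hole => rfl
  | neg A ih => simp only [comp, fill, ih]
  | and A t ih => simp only [comp, fill, ih]

theorem ECtx.eval_fill_congr (A : ECtx) {e e' : SExp} (h : e.eval = e'.eval) :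
    (A.fill e).eval = (A.fill e').eval := by
  induction A with
  | hole => exact h
  | neg A ih => simp only [fill, SExp.eval, ih]
  | and A t ih => simp only [fill, SExp.eval, ih]

theorem GCtx.eval_fill_congr (C : GCtx) {e e' : SExp} (h : e.eval = e'.eval) :
    (C.fill e).eval = (C.fill e').eval := by
  induction C with
  | hole => exact h
  | neg C ih => simp only [fill, SExp.eval, ih]
  | andL C t ih => simp only [fill, SExp.eval, ih]
  | andR t C ih => simp only [fill, SExp.eval, ih]

theorem SRL.fill {a : SRLab} {e e' : SExp} (A : ECtx) (h : SRL a e e') :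
    SRL a (A.fill e) (A.fill e') := by
  cases h <;> simp only [← ECtx.fill_comp] <;> constructor

theorem SR.fill {e e' : SExp} (A : ECtx) (h : SR e e') : SR (A.fill e) (A.fill e') :=
  let ⟨a, h⟩ := h; ⟨a, h.fill A⟩

theorem SR.reflTransGen_fill {e e' : SExp} (A : ECtx) (h : ReflTransGen SR e e') :
    ReflTransGen SR (A.fill e) (A.fill e') :=
  h.lift A.fill fun _ _ => SR.fill A

theorem SR.eval_eq {e e' : SExp} (h : SR e e') : e.eval = e'.eval := by
  obtain ⟨_, h⟩ := h
  cases h <;> exact ECtx.eval_fill_congr _ (by simp [SExp.eval])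

theorem SR.reflTransGen_eval_eq {e e' : SExp} (h : ReflTransGen SR e e') :
    e.eval = e'.eval := by
  induction h with
  | refl => rfl
  | tail _ hstep ih => exact ih.trans hstep.eval_eq

theorem SExp.reflTransGen_SR_eval (e : SExp) :
    ReflTransGen SR e (bif e.eval then .top else .bot) := by
  induction e with
  | bot => exact .refl
  | top => exact .refl
  | neg e ih =>
    have hneg := SR.reflTransGen_fill (.neg .hole) ih
    cases hv : e.eval <;> simp only [hv, cond_false, cond_true, ECtx.fill] at hneg <;>
      simp only [eval, hv, Bool.not_false, Bool.not_true, cond_false, cond_true]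
    · exact hneg.tail ⟨.neg2, .neg2 .hole⟩
    · exact hneg.tail ⟨.neg1, .neg1 .hole⟩
  | and e₁ e₂ ih₁ ih₂ =>
    have hleft := SR.reflTransGen_fill (.and .hole e₂) ih₁
    cases hv : e₁.eval <;> simp only [hv, cond_false, cond_true, ECtx.fill] at hleft <;>
      simp only [eval, hv, Bool.false_and, Bool.true_and, cond_false]
    · exact hleft.tail ⟨.bot, .bot .hole e₂⟩
    · exact (hleft.tail ⟨.top, .top .hole e₂⟩).trans ih₂

theorem sConv_iff_eval (e : SExp) : SConv e ↔ e.eval = true := by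
  refine ⟨fun h => SR.reflTransGen_eval_eq h, fun h => ?_⟩
  simpa [SConv, h] using e.reflTransGen_SR_eval

/-- correctness of `(top)`: `e1 →top e2` implies `e1 ∼c e2`. -/
theorem simple_top_correct :
    ∀ e1 e2 : SExp, TopT e1 e2 →
      ∀ C : GCtx, SConv (C.fill e1) ↔ SConv (C.fill e2) := by
  rintro _ _ ⟨D, e⟩ C
  have hD : (D.fill (.and .top e)).eval = (D.fill e).eval :=
    D.eval_fill_congr (by simp [SExp.eval])
  rw [sConv_iff_eval, sConv_iff_eval, C.eval_fill_congr hD]
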